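/- arXiv:1612.03402 — 4 statements merged into one kernel-verified Lean document; each statement's English description precedes it below -/
import Mathlib

section
/- For every integer d ≥ 2, the function n ↦ n^{log₂ d} is little-o of the function n ↦ n^{-log₂(2^{1/d}-1)} as n → ∞ over the positive reals. In particular, for every real n > 1, n^{log₂ d} < n^{-log₂(2^{1/d}-1)}. -/
open Filter Asymptotics

lemma aux_exp_lt (d : ℕ) (hd : 2 ≤ d) :
    Real.logb 2 d < - Real.logb 2 ((2 : ℝ) ^ ((1 : ℝ) / d) - 1) := by
  have hd0 : (0 : ℝ) < d := by positivity
  have hd1 : (1 : ℝ) < d := by exact_mod_cast lt_of_lt_of_le one_lt_two hd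
  -- 2 < (1 + 1/d)^d
  have h1 : (2 : ℝ) < (1 + 1 / d) ^ (d : ℝ) := by
    have := one_add_mul_self_lt_rpow_one_add (s := 1 / (d : ℝ))
      (by linarith [one_div_pos.mpr hd0] : (-1 : ℝ) ≤ 1 / d) (by positivity) (p := (d : ℝ)) hd1
    calc (2 : ℝ) = 1 + (d : ℝ) * (1 / d) := by rw [mul_one_div, div_self hd0.ne']; norm_num
    _ < (1 + 1 / d) ^ (d : ℝ) := this
  -- 2^(1/d) < 1 + 1/d
  have h2 : (2 : ℝ) ^ ((1 : ℝ) / d) < 1 + 1 / d := by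
    have := Real.rpow_lt_rpow (by norm_num) h1 (by positivity : (0:ℝ) < 1 / d)
    rwa [← Real.rpow_mul (by positivity), mul_one_div, div_self hd0.ne',
      Real.rpow_one] at this
  have hx1 : (1 : ℝ) < (2 : ℝ) ^ ((1 : ℝ) / d) := by
    have := Real.one_lt_rpow_iff_of_pos (x := 2) (by norm_num) (y := 1 / d)
    rw [this]; exact Or.inl ⟨by norm_num, by positivity⟩
  have hxpos : (0 : ℝ) < (2 : ℝ) ^ ((1 : ℝ) / d) - 1 := by linarith
  -- d * (2^(1/d) - 1) < 1
  have hkey : (d : ℝ) * ((2 : ℝ) ^ ((1 : ℝ) / d) - 1) < 1 := by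
    have : (2 : ℝ) ^ ((1 : ℝ) / d) - 1 < 1 / d := by linarith
    calc (d : ℝ) * ((2 : ℝ) ^ ((1 : ℝ) / d) - 1) < (d : ℝ) * (1 / d) :=
          by exact mul_lt_mul_of_pos_left this hd0
    _ = 1 := by field_simp
  have hlog : Real.logb 2 ((d : ℝ) * ((2 : ℝ) ^ ((1 : ℝ) / d) - 1)) < 0 :=
    Real.logb_neg (b := 2) (by norm_num) (by positivity) hkey
  rw [Real.logb_mul hd0.ne' hxpos.ne'] at hlog
  linarith

/-- Theorem 1: `n ^ (log₂ d)` is little-o of `n ^ (-log₂ (2^(1/d) - 1))` as `n → ∞`,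
and for every real `n > 1` the former is strictly smaller than the latter. -/
theorem stmt_2 (d : ℕ) (hd : 2 ≤ d) :
    (fun n : ℝ => n ^ (Real.logb 2 d)) =o[atTop]
        (fun n : ℝ => n ^ (- Real.logb 2 ((2 : ℝ) ^ ((1 : ℝ) / d) - 1))) ∧
      ∀ n : ℝ, 1 < n →
        n ^ (Real.logb 2 d) < n ^ (- Real.logb 2 ((2 : ℝ) ^ ((1 : ℝ) / d) - 1)) := by
  have h := aux_exp_lt d hd
  constructor
  · apply isLittleO_of_tendsto'
    · filter_upwards [eventually_gt_atTop (0:ℝ)] with x hx h0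
      exact absurd h0 (ne_of_gt (Real.rpow_pos_of_pos hx _))
    · have := tendsto_rpow_neg_atTop (y := - Real.logb 2 ((2 : ℝ) ^ ((1 : ℝ) / d) - 1) - Real.logb 2 d) (by linarith)
      apply this.congr'
      filter_upwards [eventually_gt_atTop (0:ℝ)] with x hx
      rw [← Real.rpow_sub hx]; ring_nf
  · intro n hn
    exact Real.rpow_lt_rpow_of_exponent_lt hn h
end

section
/- Let d ≥ 3 be an integer and c₁ an arbitrary real constant. Define T : ℕ → ℝ by T(n) = c₁·Γ(d+n)/Γ(n+1) - (2/(d-2))·n - d/((d-1)(d-2)), where Γ is the real Gamma function. Then T satisfies the recurrence T(n) = (2n - 1)/n + ((n + d - 1)/n)·T(n-1) for all n ≥ 2. -/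
/-- The closed form `T(n) = c₁·Γ(d+n)/Γ(n+1) - (2/(d-2))·n - d/((d-1)(d-2))` satisfies the
average-case recurrence `T(n) = (2n-1)/n + ((n+d-1)/n)·T(n-1)` for all `n ≥ 2`. -/
theorem stmt_9 (d : ℕ) (hd : 3 ≤ d) (c₁ : ℝ) (T : ℕ → ℝ)
    (hT : ∀ n : ℕ, T n = c₁ * Real.Gamma ((d : ℝ) + n) / Real.Gamma ((n : ℝ) + 1)
        - (2 / ((d : ℝ) - 2)) * n - (d : ℝ) / (((d : ℝ) - 1) * ((d : ℝ) - 2))) :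
    ∀ n : ℕ, 2 ≤ n →
      T n = (2 * (n : ℝ) - 1) / n + (((n : ℝ) + d - 1) / n) * T (n - 1) := by
  intro n hn
  obtain ⟨m, rfl⟩ : ∃ m, n = m + 2 := ⟨n - 2, by omega⟩
  have h1 : m + 2 - 1 = m + 1 := rfl
  rw [h1, hT, hT]
  have hd' : (3 : ℝ) ≤ (d : ℝ) := by exact_mod_cast hd
  have hΓ1 : Real.Gamma ((d : ℝ) + (↑(m + 2))) =
      ((d : ℝ) + m + 1) * Real.Gamma ((d : ℝ) + (↑(m + 1))) := by
    have : (d : ℝ) + (↑(m + 2)) = ((d : ℝ) + (↑(m + 1))) + 1 := by push_cast; ring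
    rw [this, Real.Gamma_add_one (by push_cast; nlinarith)]
    push_cast; ring
  have hΓ2 : Real.Gamma ((↑(m + 2) : ℝ) + 1) =
      ((m : ℝ) + 2) * Real.Gamma ((↑(m + 1) : ℝ) + 1) := by
    have : ((↑(m + 2) : ℝ)) + 1 = ((↑(m + 1) : ℝ) + 1) + 1 := by push_cast; ring
    rw [this, Real.Gamma_add_one (by positivity)]
    push_cast; ring
  rw [hΓ1, hΓ2]
  have hΓpos : 0 < Real.Gamma ((↑(m + 1) : ℝ) + 1) := Real.Gamma_pos_of_pos (by positivity)
  have h2 : ((d : ℝ) - 2) ≠ 0 := by nlinarith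
  have h3 : ((d : ℝ) - 1) ≠ 0 := by nlinarith
  have h4 : ((m : ℝ) + 2) ≠ 0 := by positivity
  push_cast
  field_simp
  ring
end

section
/- Let d ≥ 3 be an integer, c₁ > 0 a real constant, and define T : ℕ → ℝ by T(n) = c₁·Γ(d+n)/Γ(n+1) - (2/(d-2))·n - d/((d-1)(d-2)), where Γ is the real Gamma function. Then T(n)/n^{d-1} → c₁ as n → ∞; in particular T(n) = Θ(n^{d-1}). -/
open Filter Asymptotics Polynomial

/-!
`Γ(n + d) / Γ(n + 1) = (n + 1)(n + 2)⋯(n + d - 1)` is the value at `n + 1` of the ascending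
Pochhammer polynomial of degree `d - 1`, so it is a monic polynomial in `n` and hence `~ n^(d-1)`.
What remains of `T(n)` is affine in `n`, negligible against `n^(d-1)` because `d - 1 ≥ 2`;
thus `T(n) ~ c₁ n^(d-1)`, which gives both the limit and the `Θ` bound.
-/

theorem Real.Gamma_add_nat_div_Gamma {x : ℝ} (hx : 0 < x) (m : ℕ) :
    Real.Gamma (x + m) / Real.Gamma x = (ascPochhammer ℝ m).eval x := by
  induction m with
  | zero => simp [(Real.Gamma_pos_of_pos hx).ne']
  | succ m ih =>
    rw [Nat.cast_succ, ← add_assoc, Real.Gamma_add_one (by positivity), mul_div_assoc, ih,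
      ascPochhammer_succ_right, eval_mul, mul_comm]
    simp

theorem ascPochhammer_eval_add_one_isEquivalent_pow (m : ℕ) :
    (fun x : ℝ => (ascPochhammer ℝ m).eval (x + 1)) ~[atTop] fun x => x ^ m := by
  have hmonic := (monic_ascPochhammer (S := ℝ) m).comp_X_add_C 1
  have h := ((ascPochhammer ℝ m).comp (X + C 1)).isEquivalent_atTop_lead
  rw [hmonic.leadingCoeff, natDegree_comp, natDegree_X_add_C, mul_one] at h
  simpa using h

theorem isLittleO_affine_pow_atTop {m : ℕ} (hm : 1 < m) (a b : ℝ) :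
    (fun x : ℝ => a * x + b) =o[atTop] fun x => x ^ m := by
  have hx : (fun x : ℝ => a * x) =o[atTop] fun x => x ^ m := by
    simpa using (isLittleO_pow_pow_atTop_of_lt hm).const_mul_left a
  have hb : (fun _ : ℝ => b) =o[atTop] fun x => x ^ m := by
    simpa using (isLittleO_pow_pow_atTop_of_lt (by omega : 0 < m)).const_mul_left b
  exact hx.add hb

theorem isEquivalent_mul_ascPochhammer_sub_affine {m : ℕ} (hm : 1 < m) {c : ℝ} (hc : c ≠ 0)
    (a b : ℝ) :
    (fun x : ℝ => c * (ascPochhammer ℝ m).eval (x + 1) - (a * x + b)) ~[atTop]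
      fun x => c * x ^ m :=
  (IsEquivalent.refl.mul (ascPochhammer_eval_add_one_isEquivalent_pow m)).sub_isLittleO
    ((isLittleO_affine_pow_atTop hm a b).const_mul_right hc)

theorem tendsto_div_and_isTheta_of_isEquivalent_const_mul {α : Type*} {l : Filter α}
    {u v : α → ℝ} {c : ℝ} (hc : c ≠ 0) (hv : ∀ᶠ x in l, v x ≠ 0)
    (h : u ~[l] fun x => c * v x) :
    Tendsto (fun x => u x / v x) l (nhds c) ∧ u =Θ[l] v := by
  refine ⟨?_, h.trans_isTheta ((isTheta_const_mul_left hc).mpr isTheta_rfl)⟩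
  have hcv : Tendsto (fun x => c * v x / v x) l (nhds c) :=
    tendsto_const_nhds.congr' (hv.mono fun x hx => (mul_div_cancel_right₀ c hx).symm)
  exact (h.div IsEquivalent.refl).symm.tendsto_nhds hcv

/-- The closed-form solution of the average-case recurrence of QHV-II satisfies
`T(n)/n^(d-1) → c₁` as `n → ∞`; in particular `T(n) = Θ(n^(d-1))`. -/
theorem stmt_10 (d : ℕ) (hd : 3 ≤ d) (c₁ : ℝ) (hc₁ : 0 < c₁) (T : ℕ → ℝ)
    (hT : ∀ n : ℕ, T n = c₁ * Real.Gamma ((d : ℝ) + n) / Real.Gamma ((n : ℝ) + 1)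
        - (2 / ((d : ℝ) - 2)) * n - (d : ℝ) / (((d : ℝ) - 1) * ((d : ℝ) - 2))) :
    Tendsto (fun n : ℕ => T n / (n : ℝ) ^ (d - 1)) atTop (nhds c₁) ∧
      (fun n : ℕ => T n) =Θ[atTop] (fun n : ℕ => (n : ℝ) ^ (d - 1)) := by
  obtain ⟨m, rfl⟩ : ∃ m, d = m + 1 := ⟨d - 1, by omega⟩
  set a : ℝ := 2 / (((m + 1 : ℕ) : ℝ) - 2)
  set b : ℝ := ((m + 1 : ℕ) : ℝ) / ((((m + 1 : ℕ) : ℝ) - 1) * (((m + 1 : ℕ) : ℝ) - 2))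
  have hT' : ∀ n : ℕ, T n = c₁ * (ascPochhammer ℝ m).eval ((n : ℝ) + 1) - (a * n + b) := by
    intro n
    rw [hT, mul_div_assoc, ← Real.Gamma_add_nat_div_Gamma (by positivity)]
    push_cast
    ring_nf
  have hm : 1 < m := by omega
  have hequiv := (isEquivalent_mul_ascPochhammer_sub_affine hm hc₁.ne' a b).comp_tendsto
    tendsto_natCast_atTop_atTop
  simp only [Nat.add_sub_cancel, funext hT']
  exact tendsto_div_and_isTheta_of_isEquivalent_const_mul hc₁.ne'
    (eventually_ne_atTop 0 |>.mono fun n hn => by positivity) hequiv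
end

section
/- Let d ≥ 1 be an integer, and let r₋, r* ∈ ℝ^d with r₋ ≤ r* componentwise, and let s' ∈ ℝ^d with r₋ ≤ s' ≤ r* componentwise. Let B = {s ∈ ℝ^d : ∀j, r₋ⱼ ≤ sⱼ ≤ r*ⱼ}, and for j = 1, …, d let Hⱼ = {s ∈ B : (∀ l < j, s_l < s'_l) ∧ sⱼ ≥ s'ⱼ}. Then the sets H₁, …, H_d are pairwise disjoint and their union equals B \ {s ∈ B : ∀j, sⱼ < s'ⱼ}. -/
/-- Correctness of the QHV-II splitting scheme: the hypercuboid `B` minus the region of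
points strictly below the pivot `s'` on every coordinate is partitioned into the `d`
pairwise-disjoint hypercuboids `H j`. -/
theorem stmt_12 (d : ℕ) (hd : 1 ≤ d) (rlo rhi s' : Fin d → ℝ)
    (hlohi : ∀ j, rlo j ≤ rhi j) (hlos : ∀ j, rlo j ≤ s' j) (hshi : ∀ j, s' j ≤ rhi j)
    (B : Set (Fin d → ℝ)) (hB : B = {s | ∀ j, rlo j ≤ s j ∧ s j ≤ rhi j})
    (H : Fin d → Set (Fin d → ℝ))
    (hH : ∀ j, H j = {s ∈ B | (∀ l, l < j → s l < s' l) ∧ s' j ≤ s j}) :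
    (Pairwise fun i j => Disjoint (H i) (H j)) ∧
      (⋃ j, H j) = B \ {s ∈ B | ∀ j, s j < s' j} := by
  constructor
  · intro i j hij
    rw [Set.disjoint_left]
    intro s hsi hsj
    rw [hH] at hsi hsj
    rcases lt_or_gt_of_ne hij with h | h
    · exact absurd (hsj.2.1 i h) (not_lt.2 hsi.2.2)
    · exact absurd (hsi.2.1 j h) (not_lt.2 hsj.2.2)
  · ext s
    simp only [Set.mem_iUnion, Set.mem_diff, Set.mem_setOf_eq]
    constructor
    · rintro ⟨j, hj⟩
      rw [hH] at hj
      exact ⟨hj.1, fun h => absurd (h.2 j) (not_lt.2 hj.2.2)⟩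
    · rintro ⟨hsB, hns⟩
      have h1 : ¬ ∀ j, s j < s' j := fun h => hns ⟨hsB, h⟩
      push_neg at h1
      obtain ⟨j0, hj0⟩ := h1
      have hne : ({j | s' j ≤ s j} : Finset (Fin d)).Nonempty :=
        ⟨j0, by simpa using hj0⟩
      obtain ⟨j, hjmem, hmin⟩ := Finset.exists_min_image _ id hne
      simp only [Finset.mem_filter] at hjmem hmin
      refine ⟨j, ?_⟩
      rw [hH]
      refine ⟨hsB, fun l hl => ?_, by simpa using hjmem⟩
      by_contra h
      push_neg at h
      exact absurd (hmin l (by simpa using h)) (not_le.2 hl)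
end
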